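/- For all p, q ≥ 0, H^p ⋄_a H^q ⊆ H^{p+q}, where Hⁿ denotes the k-span of angularly decorated rooted forests with at most n + 1 vertices; equivalently, every forest occurring with nonzero coefficient in the product F₁ ⋄_a F₂ of two forests has at most deg(F₁) + deg(F₂) − 1 vertices, where deg(F) is the number of vertices of F. -/

import Mathlib

set_option linter.unreachableTactic false
set_option linter.unnecessarySeqFocus false
set_option linter.unusedTactic false

/-! Angularly decorated planar rooted trees and forests over a decoration set `X`.
A tree is either the single-vertex tree `•` (leaf) or the grafting `B⁺(F)` of a forest;
a forest is an alternating word `T₁ x₁ T₂ x₂ ⋯ x_{ℓ-1} T_ℓ` of trees and decorations. -/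
mutual
  inductive ATree (X : Type) : Type
    | leaf : ATree X
    | graft : AForest X → ATree X
  inductive AForest (X : Type) : Type
    | single : ATree X → AForest X
    | cons : ATree X → X → AForest X → AForest X
end

mutual
  /-- Depth of an angularly decorated tree. -/
  def ATree.depth {X : Type} : ATree X → ℕ
    | .leaf => 0
    | .graft F => AForest.depth F + 1
  /-- Depth of an angularly decorated forest. -/
  def AForest.depth {X : Type} : AForest X → ℕ
    | .single T => ATree.depth T
    | .cons T _ F => max (ATree.depth T) (AForest.depth F)
end

mutual
  /-- An auxiliary size of an angularly decorated tree. -/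
  def ATree.size {X : Type} : ATree X → ℕ
    | .leaf => 1
    | .graft F => AForest.size F + 1
  /-- An auxiliary size of an angularly decorated forest. -/
  def AForest.size {X : Type} : AForest X → ℕ
    | .single T => ATree.size T + 1
    | .cons T _ F => ATree.size T + AForest.size F + 1
end

mutual
  /-- The number of vertices of an angularly decorated tree. -/
  def ATree.deg {X : Type} : ATree X → ℕ
    | .leaf => 1
    | .graft F => AForest.deg F + 1
  /-- The number of vertices of an angularly decorated forest. -/
  def AForest.deg {X : Type} : AForest X → ℕ
    | .single T => ATree.deg T
    | .cons T _ F => ATree.deg T + AForest.deg F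
end

/-- Auxiliary lemma for termination proofs. -/
theorem natlex_of_le_of_lt {a₁ a₂ b₁ b₂ : ℕ} (h1 : a₁ ≤ a₂) (h2 : b₁ < b₂) :
    Prod.Lex (fun x y : ℕ => x < y) (fun x y : ℕ => x < y) (a₁, b₁) (a₂, b₂) := by
  rcases lt_or_eq_of_le h1 with h | rfl
  · exact Prod.Lex.left _ _ h
  · exact Prod.Lex.right _ h2

/-- `RBF k X` is the free `k`-module on the set of angularly decorated rooted forests. -/
abbrev RBF (k X : Type) [CommRing k] := AForest X →₀ k

mutual
  /-- The product `⋄ₐ` on basis trees (with values in the free module on trees). -/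
  noncomputable def mulT {k X : Type} [CommRing k] (lam : k) :
      ATree X → ATree X → (ATree X →₀ k)
    | .leaf, T' => Finsupp.single T' 1
    | T, .leaf => Finsupp.single T 1
    | .graft F, .graft F' =>
        Finsupp.mapDomain ATree.graft (mulF lam (.single (.graft F)) F')
          + Finsupp.mapDomain ATree.graft (mulF lam F (.single (.graft F')))
          + lam • Finsupp.mapDomain ATree.graft (mulF lam F F')
  termination_by T T' => (ATree.depth T + ATree.depth T', ATree.size T + ATree.size T')
  decreasing_by
    all_goals
      first
        | (apply Prod.Lex.left
           simp [ATree.depth, AForest.depth] <;> omega)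
        | (apply natlex_of_le_of_lt <;>
            simp [ATree.depth, AForest.depth, ATree.size, AForest.size] <;>
            omega)
  /-- The product `⋄ₐ` on basis forests. -/
  noncomputable def mulF {k X : Type} [CommRing k] (lam : k) :
      AForest X → AForest X → RBF k X
    | .single T, .single T' => Finsupp.mapDomain AForest.single (mulT lam T T')
    | .single T, .cons T' y G' =>
        Finsupp.mapDomain (fun t => AForest.cons t y G') (mulT lam T T')
    | .cons T x G, F' => Finsupp.mapDomain (fun g => AForest.cons T x g) (mulF lam G F')
  termination_by F F' => (AForest.depth F + AForest.depth F', AForest.size F + AForest.size F')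
  decreasing_by
    all_goals
      first
        | (apply Prod.Lex.left
           simp [ATree.depth, AForest.depth] <;> omega)
        | (apply natlex_of_le_of_lt <;>
            simp [ATree.depth, AForest.depth, ATree.size, AForest.size] <;>
            omega)
end

open scoped TensorProduct

variable {k X : Type} [CommRing k]

/-- The unit `•` of the Rota-Baxter algebra `kF_X^a`: the single-vertex tree. -/
noncomputable def RBF.one : RBF k X := Finsupp.single (AForest.single ATree.leaf) 1

/-- The canonical basis inclusion of forests into `kF_X^a`. -/
noncomputable def RBF.of (F : AForest X) : RBF k X := Finsupp.single F 1

/-- The natural map `i_X : X → kF_X^a`, `x ↦ • x •`. -/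
noncomputable def RBF.iX (x : X) : RBF k X :=
  RBF.of (AForest.cons ATree.leaf x (AForest.single ATree.leaf))

/-- The grafting operator `B⁺` as a `k`-linear operator on `kF_X^a`. -/
noncomputable def RBF.Bplus : RBF k X →ₗ[k] RBF k X :=
  Finsupp.lmapDomain k k (fun F => AForest.single (ATree.graft F))

/-- The multiplication `⋄ₐ` on `kF_X^a` as a `k`-bilinear map. -/
noncomputable def RBF.mul (lam : k) : RBF k X →ₗ[k] RBF k X →ₗ[k] RBF k X :=
  Finsupp.lift _ k _ fun F => Finsupp.lift _ k _ fun F' => mulF lam F F'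

/-- Concatenation of two forests with the angle between them decorated by `x`. -/
def concatA (x : X) : AForest X → AForest X → AForest X
  | .single T, F' => .cons T x F'
  | .cons T y G, F' => .cons T y (concatA x G F')

/-- Concatenation with middle angle decorated by `x`, as a bilinear map on `kF_X^a`. -/
noncomputable def RBF.concat (x : X) : RBF k X →ₗ[k] RBF k X →ₗ[k] RBF k X :=
  Finsupp.lift _ k _ fun F => Finsupp.lift _ k _ fun F' => RBF.of (concatA x F F')

/-- Given two bilinear maps `f g` on a module `M`, the bilinear map on `M ⊗ M` sending
`(a ⊗ b, c ⊗ d)` to `f a c ⊗ g b d`. -/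
noncomputable def mixMap {M : Type} [AddCommGroup M] [Module k M]
    (f g : M →ₗ[k] M →ₗ[k] M) :
    (M ⊗[k] M) →ₗ[k] (M ⊗[k] M) →ₗ[k] (M ⊗[k] M) :=
  TensorProduct.curry
    ((TensorProduct.map (TensorProduct.lift f) (TensorProduct.lift g)).comp
      (TensorProduct.tensorTensorTensorComm k M M M M).toLinearMap)

mutual
  /-- The angular coproduct of a basis tree: the sum of `cl(H) ⊗ T/H` over all
  subforests `H ⊑ T` (sequences of mutually disjoint full subtrees and bare angular
  decorations in planar order). -/
  noncomputable def coT (lam : k) : ATree X → RBF k X ⊗[k] RBF k X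
    | .leaf => RBF.one ⊗ₜ[k] RBF.one
    | .graft F => (RBF.of (AForest.single (ATree.graft F))) ⊗ₜ[k] RBF.one
        + (LinearMap.lTensor (RBF k X) RBF.Bplus) (coF lam F)
  /-- The angular coproduct of a basis forest: the sum of `cl(H) ⊗ F/H` over all
  subforests `H ⊑ F`. -/
  noncomputable def coF (lam : k) : AForest X → RBF k X ⊗[k] RBF k X
    | .single T => coT lam T
    | .cons T x G =>
        mixMap (RBF.concat x) (RBF.mul lam) (coT lam T) (coF lam G)
          + mixMap (RBF.mul lam) (RBF.concat x) (coT lam T) (coF lam G)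
end

/-- The angular coproduct `Δₐ : kF_X^a → kF_X^a ⊗ kF_X^a`,
`Δₐ(F) = Σ_{H ⊑ F} cl(H) ⊗ F/H`. -/
noncomputable def RBF.Delta (lam : k) : RBF k X →ₗ[k] RBF k X ⊗[k] RBF k X :=
  Finsupp.lift _ k _ fun F => coF lam F

/-- The counit `εₐ : kF_X^a → k` sending the single-vertex tree `•` to `1` and every
other forest to `0`. -/
noncomputable def RBF.eps : RBF k X →ₗ[k] k :=
  Finsupp.lift _ k _ fun F =>
    match F with
    | .single .leaf => (1 : k)
    | _ => 0

/-- The unit map `u : k → kF_X^a`, `c ↦ c •`. -/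
noncomputable def RBF.unit : k →ₗ[k] RBF k X :=
  LinearMap.toSpanSingleton k (RBF k X) RBF.one

/-- The `k`-submodule of `kF_X^a` spanned by the angularly decorated rooted forests
with at most `n + 1` vertices. -/
noncomputable def RBF.filtration (k X : Type) [CommRing k] (n : ℕ) :
    Submodule k (RBF k X) :=
  Submodule.span k {a : RBF k X | ∃ F : AForest X, AForest.deg F ≤ n + 1 ∧ a = RBF.of F}

theorem Finsupp.mapDomain_mem_supported {R M α β : Type*} [Semiring R] [AddCommMonoid M]
    [Module R M] {f : α → β} {s : Set α} {t : Set β} (hf : Set.MapsTo f s t) {v : α →₀ M}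
    (hv : v ∈ Finsupp.supported M R s) : Finsupp.mapDomain f v ∈ Finsupp.supported M R t :=
  Finsupp.supported_comap_lmapDomain M R f t (Finsupp.supported_mono hf.subset_preimage hv)

theorem ATree.deg_pos (T : ATree X) : 0 < T.deg := by
  cases T <;> simp [ATree.deg]

theorem AForest.deg_pos (F : AForest X) : 0 < F.deg := by
  cases F <;> simp [AForest.deg, ATree.deg_pos]

/-- A vertex is lost exactly where `B⁺F ⋄ₐ B⁺F'` merges the two roots into one; every other
step of the recursion only regrafts or reattaches. -/
theorem mulT_mem_supported_and_mulF_mem_supported (lam : k) :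
    (∀ T T' : ATree X,
      mulT lam T T' ∈ Finsupp.supported k k {S | S.deg + 1 ≤ T.deg + T'.deg}) ∧
    ∀ F F' : AForest X,
      mulF lam F F' ∈ Finsupp.supported k k {G | G.deg + 1 ≤ F.deg + F'.deg} := by
  refine mulT.mutual_induct _ _ ?leaf_left ?leaf_right ?graft ?single ?single_cons ?cons
  case leaf_left =>
    intro T'
    rw [mulT]
    exact Finsupp.single_mem_supported k _ (by simp [ATree.deg])
  case leaf_right =>
    intro T hT
    rw [mulT.eq_2 lam T hT]
    exact Finsupp.single_mem_supported k _ (by simp [ATree.deg])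
  case graft =>
    intro F F' h₁ h₂ h₃
    have := F.deg_pos
    have := F'.deg_pos
    rw [mulT]
    refine add_mem (add_mem ?_ ?_) (Submodule.smul_mem _ _ ?_) <;>
      refine Finsupp.mapDomain_mem_supported (fun G hG => ?_) ‹_›
    all_goals simp only [Set.mem_ofPred_eq, ATree.deg, AForest.deg] at hG ⊢; omega
  case single =>
    intro T T' h
    rw [mulF]
    exact Finsupp.mapDomain_mem_supported (fun S hS => by simpa [AForest.deg] using hS) h
  case single_cons =>
    intro T T' y G' h
    rw [mulF]
    refine Finsupp.mapDomain_mem_supported (fun S hS => ?_) h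
    simp only [Set.mem_ofPred_eq, AForest.deg] at hS ⊢
    omega
  case cons =>
    intro T x G F' h
    rw [mulF]
    refine Finsupp.mapDomain_mem_supported (fun S hS => ?_) h
    simp only [Set.mem_ofPred_eq, AForest.deg] at hS ⊢
    omega

theorem mulF_mem_supported (lam : k) (F F' : AForest X) :
    mulF lam F F' ∈ Finsupp.supported k k {G | G.deg + 1 ≤ F.deg + F'.deg} :=
  (mulT_mem_supported_and_mulF_mem_supported lam).2 F F'

theorem RBF.mul_of (lam : k) (F F' : AForest X) :
    RBF.mul lam (RBF.of F) (RBF.of F') = mulF lam F F' := by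
  simp [RBF.mul, RBF.of]

theorem RBF.filtration_eq_supported (n : ℕ) :
    RBF.filtration k X n = Finsupp.supported k k {F | F.deg ≤ n + 1} := by
  rw [RBF.filtration, Finsupp.supported_eq_span_single]
  congr 1
  ext
  simp [RBF.of, eq_comm]

/-- For all `p, q ≥ 0` one has `H^p ⋄ₐ H^q ⊆ H^{p+q}`, where `Hⁿ`
is the `k`-span of the angularly decorated rooted forests with at most `n + 1` vertices;
i.e. every forest occurring in the product `F₁ ⋄ₐ F₂` of two forests has at most
`deg(F₁) + deg(F₂) − 1` vertices. -/
theorem rbf_product_filtration (k X : Type) [CommRing k] (lam : k) (p q : ℕ)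
    (a b : RBF k X) (ha : a ∈ RBF.filtration k X p) (hb : b ∈ RBF.filtration k X q) :
    RBF.mul lam a b ∈ RBF.filtration k X (p + q) := by
  suffices h : Submodule.map₂ (RBF.mul lam) (RBF.filtration k X p) (RBF.filtration k X q) ≤
      RBF.filtration k X (p + q) from Submodule.map₂_le.1 h a ha b hb
  rw [RBF.filtration, RBF.filtration, Submodule.map₂_span_span, Submodule.span_le]
  rintro _ ⟨_, ⟨F, hF, rfl⟩, _, ⟨F', hF', rfl⟩, rfl⟩
  show RBF.mul lam (RBF.of F) (RBF.of F') ∈ _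
  rw [RBF.mul_of, RBF.filtration_eq_supported]
  refine Finsupp.supported_mono ?_ (mulF_mem_supported lam F F')
  intro G (hG : G.deg + 1 ≤ F.deg + F'.deg)
  show G.deg ≤ p + q + 1
  omega
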